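/- Define a(I,θ) = ∂_yH(ψ(I,θ))/ω(I) for (I,θ) ∈ (0, r₀) × ℝ. Then there exist r ∈ (0, r₀] and a constant C > 0 such that for all I ∈ (0, r): sup_{θ∈ℝ} ( |a(I,θ)| + |∂_θ a(I,θ)| ) ≤ C√I and sup_{θ∈ℝ} |∂_I a(I,θ)| ≤ C/√I. -/

import Mathlib

/-!
Near the nondegenerate minimum `0` of `H`, both `H u` and `dH(u) u` are comparable to `‖u‖²`,
and `‖dH(u)‖ ≲ ‖u‖`. Since `H (ψ I θ) = K I ≍ I`, the orbit has radius `‖ψ I θ‖ ≍ √I`, so `dH` is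
`O(√I)` along it; as `∂_θ ψ = ω⁻¹ J∇H(ψ)`, this gives `a, ∂_θ a = O(√I)`.

Since `∂_I a = ω⁻¹ d²H(ψ)(∂_I ψ) e₂ - ω'/ω² dH(ψ) e₂` and `ω'/ω² dH(ψ) = O(I⁻¹ √I)`, it remains to
show `∂_I ψ = O(1/√I)`. At `θ = 0` both `ψ` and `∂_I ψ` lie on the `y`-axis, and differentiating
`H ∘ ψ = K` gives `dH(ψ)(∂_I ψ) = ω`; since `dH(ψ) ψ ≳ ‖ψ‖² ≳ I`, this yields
`‖∂_I ψ(I, 0)‖ ≲ ω / √I`, and `ω` is bounded by the growth assumptions on `K`. Differentiating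
`∂_θ ψ = ω⁻¹ J∇H(ψ)` in `I` shows that `θ ↦ ∂_I ψ` solves a linear equation with bounded
coefficient and forcing `O(1/√I)`; Grönwall over one period propagates the bound to all `θ`.
-/

open Filter Topology Set Metric

theorem sqrt_mul_sqrt_le_and_le_of_sq_bounds {x h m M c₁ c₂ I : ℝ} (hm : 0 < m) (hM : 0 < M)
    (hI : 0 ≤ I) (hx : 0 ≤ x) (hlow : m * x ^ 2 ≤ h) (hup : h ≤ M * x ^ 2)
    (hc₁ : c₁ * I ≤ h) (hc₂ : h ≤ c₂ * I) :
    √(c₁ / M) * √I ≤ x ∧ x ≤ √(c₂ / m) * √I := by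
  constructor
  · rw [← Real.sqrt_mul' _ hI, Real.sqrt_le_left hx, div_mul_eq_mul_div, div_le_iff₀ hM]
    linarith
  · rw [← Real.sqrt_mul' _ hI]
    refine Real.le_sqrt_of_sq_le ?_
    rw [div_mul_eq_mul_div, le_div_iff₀ hm]
    linarith

theorem abs_mul_le_div_sqrt {a b c g I : ℝ} (hI : 0 < I) (ha : |a| ≤ c / I) (hb0 : 0 ≤ b)
    (hb : b ≤ g * √I) : |a| * b ≤ c * g / √I := by
  calc |a| * b ≤ c / I * (g * √I) := mul_le_mul ha hb hb0 ((abs_nonneg a).trans ha)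
    _ = c * g / √I := by
      field_simp
      rw [Real.sq_sqrt hI.le]
      ring

theorem add_half_le_of_mul_le_deriv {g g' : ℝ → ℝ} {c : ℝ}
    (hg : ∀ t ∈ Icc (0 : ℝ) 1, HasDerivAt g (g' t) t) (hg' : ∀ t ∈ Ioo (0 : ℝ) 1, c * t ≤ g' t) :
    g 0 + c / 2 ≤ g 1 := by
  obtain ⟨s, hs, hslope⟩ := exists_hasDerivAt_eq_slope (fun t => g t - c / 2 * t ^ 2)
    (fun t => g' t - c * t) zero_lt_one
    (fun t ht => ((hg t ht).sub ((hasDerivAt_pow 2 t).const_mul _)).continuousAt.continuousWithinAt)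
    (fun t ht => ((hg t (Ioo_subset_Icc_self ht)).sub
      ((hasDerivAt_pow 2 t).const_mul (c / 2))).congr_deriv (by norm_num; ring))
  have := hg' s hs
  norm_num at hslope
  linarith

theorem le_three_mul_of_hasDerivAt {K ω ω' : ℝ → ℝ} {r c : ℝ}
    (hK : ∀ I ∈ Ioo 0 r, HasDerivAt K (ω I) I) (hω : ∀ I ∈ Ioo 0 r, HasDerivAt ω (ω' I) I)
    (hK0 : ∀ I ∈ Ioo 0 r, 0 ≤ K I) (hKle : ∀ I ∈ Ioo 0 r, K I ≤ c * I)
    (hω' : ∀ I ∈ Ioo 0 r, |ω' I| ≤ c / I) {I : ℝ} (hI : I ∈ Ioo 0 r) : ω I ≤ 3 * c := by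
  obtain ⟨hI0, hIr⟩ := hI
  have hsub : Icc (I / 2) I ⊆ Ioo 0 r := fun t ht => ⟨by linarith [ht.1], by linarith [ht.2]⟩
  obtain ⟨ξ, hξ, hωξ⟩ := exists_hasDerivAt_eq_slope K ω (by linarith : I / 2 < I)
    (fun t ht => (hK t (hsub ht)).continuousAt.continuousWithinAt)
    (fun t ht => hK t (hsub (Ioo_subset_Icc_self ht)))
  have hsub' : Icc ξ I ⊆ Ioo 0 r := (Icc_subset_Icc_left hξ.1.le).trans hsub
  obtain ⟨ζ, hζ, hω'ζ⟩ := exists_hasDerivAt_eq_slope ω ω' hξ.2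
    (fun t ht => (hω t (hsub' ht)).continuousAt.continuousWithinAt)
    (fun t ht => hω t (hsub' (Ioo_subset_Icc_self ht)))
  have hζ0 : I / 2 < ζ := hξ.1.trans hζ.1
  have hc : 0 ≤ c := by
    have := (abs_nonneg _).trans (hω' I ⟨hI0, hIr⟩)
    rwa [le_div_iff₀ hI0, zero_mul] at this
  have hωξ_le : ω ξ ≤ 2 * c := by
    rw [hωξ, div_le_iff₀ (by linarith)]
    nlinarith [hKle I ⟨hI0, hIr⟩, hK0 (I / 2) (hsub ⟨le_rfl, by linarith⟩)]
  have hstep : ω I - ω ξ ≤ c := by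
    have hζ' := (le_abs_self _).trans (hω' ζ (hsub' (Ioo_subset_Icc_self hζ)))
    rw [hω'ζ, div_le_div_iff₀ (by linarith [hξ.2]) (by linarith)] at hζ'
    by_contra! hlt
    nlinarith [mul_lt_mul_of_pos_right hlt (by linarith : 0 < ζ), hξ.1, hζ.2]
  linarith

section Calculus

variable {E F : Type*} [NormedAddCommGroup E] [NormedSpace ℝ E]
  [NormedAddCommGroup F] [NormedSpace ℝ F]

theorem isCoercive_of_pos [FiniteDimensional ℝ E] [Nontrivial E] (B : E →L[ℝ] E →L[ℝ] ℝ)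
    (hB : ∀ u, u ≠ 0 → 0 < B u u) : IsCoercive B := by
  have hcont : Continuous fun u => B u u := B.continuous₂.comp (continuous_id.prodMk continuous_id)
  obtain ⟨u₀, hu₀, hmin⟩ := (isCompact_sphere (0 : E) 1).exists_isMinOn
    (NormedSpace.sphere_nonempty.mpr zero_le_one) hcont.continuousOn
  have hu₀ : ‖u₀‖ = 1 := by simpa using hu₀
  refine ⟨B u₀ u₀, hB u₀ (norm_ne_zero_iff.mp (by simp [hu₀])), fun u => ?_⟩
  rcases eq_or_ne u 0 with rfl | hu
  · simp
  have hn : ‖u‖ ≠ 0 := norm_ne_zero_iff.mpr hu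
  have hmin_u : B u₀ u₀ ≤ B (‖u‖⁻¹ • u) (‖u‖⁻¹ • u) :=
    hmin (by simp [norm_smul, hn])
  simp only [map_smul, FunLike.coe_smul, Pi.smul_apply, smul_eq_mul] at hmin_u
  calc B u₀ u₀ * ‖u‖ * ‖u‖ ≤ ‖u‖⁻¹ * (‖u‖⁻¹ * B u u) * ‖u‖ * ‖u‖ := by gcongr
    _ = B u u := by field_simp

theorem norm_le_mul_norm_of_norm_fderiv_le {g : E → F} {δ C : ℝ}
    (hg : ∀ x ∈ closedBall (0 : E) δ, DifferentiableAt ℝ g x) (hg0 : g 0 = 0)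
    (hC : ∀ x ∈ closedBall (0 : E) δ, ‖fderiv ℝ g x‖ ≤ C) {u : E} (hu : ‖u‖ ≤ δ) :
    ‖g u‖ ≤ C * ‖u‖ := by
  simpa [hg0] using (convex_closedBall (0 : E) δ).norm_image_sub_le_of_norm_fderiv_le hg hC
    (mem_closedBall_self ((norm_nonneg u).trans hu)) (mem_closedBall_zero_iff.mpr hu)

theorem norm_le_mul_sq_of_norm_fderiv_le {g : E → F} {δ M : ℝ} (hM0 : 0 ≤ M)
    (hg : ∀ x ∈ closedBall (0 : E) δ, DifferentiableAt ℝ g x) (hg0 : g 0 = 0)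
    (hM : ∀ x ∈ closedBall (0 : E) δ, ‖fderiv ℝ g x‖ ≤ M * ‖x‖) {u : E} (hu : ‖u‖ ≤ δ) :
    ‖g u‖ ≤ M * ‖u‖ ^ 2 := by
  have hball : closedBall (0 : E) ‖u‖ ⊆ closedBall 0 δ := closedBall_subset_closedBall hu
  have := norm_le_mul_norm_of_norm_fderiv_le (fun y hy => hg y (hball hy)) hg0
    (fun y hy => (hM y (hball hy)).trans
      (mul_le_mul_of_nonneg_left (mem_closedBall_zero_iff.mp hy) hM0)) le_rfl
  rwa [mul_assoc, ← sq] at this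

theorem norm_apply_le_one {e : E} (he : ‖e‖ ≤ 1) : ‖ContinuousLinearMap.apply ℝ ℝ e‖ ≤ 1 :=
  ContinuousLinearMap.opNorm_le_bound _ zero_le_one fun L =>
    (L.le_opNorm e).trans (by rw [one_mul]; exact mul_le_of_le_one_right (norm_nonneg L) he)

theorem norm_inv_smul_add_smul_le {w w₀ w' : ℝ} (hw₀ : 0 < w₀) (hw : w₀ ≤ w) (v v' : F) :
    ‖w⁻¹ • v' + (-w' / w ^ 2) • v‖ ≤ ‖v'‖ / w₀ + |w'| * ‖v‖ / w₀ ^ 2 := by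
  have hw_pos : 0 < w := hw₀.trans_le hw
  refine (norm_add_le _ _).trans (add_le_add ?_ ?_)
  · rw [norm_smul, norm_inv, Real.norm_of_nonneg hw_pos.le, inv_mul_eq_div]
    gcongr
  · rw [norm_smul, norm_div, norm_neg, norm_pow, Real.norm_of_nonneg hw_pos.le,
      Real.norm_eq_abs, div_mul_eq_mul_div]
    gcongr

theorem norm_le_of_periodic_of_norm_deriv_le {f f' : ℝ → F} {A k ε : ℝ}
    (hper : Function.Periodic f 1) (hf : ∀ t, HasDerivAt f (f' t) t) (h0 : ‖f 0‖ ≤ A)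
    (hk : 0 < k) (hε : 0 ≤ ε) (hf' : ∀ t, ‖f' t‖ ≤ k * ‖f t‖ + ε) (t : ℝ) :
    ‖f t‖ ≤ (A + ε / k) * Real.exp k := by
  obtain ⟨s, hs, hst⟩ := hper.exists_mem_Ico₀ zero_lt_one t
  have hgron := norm_le_gronwallBound_of_norm_deriv_right_le
    (fun x _ => (hf x).continuousAt.continuousWithinAt) (fun x _ => (hf x).hasDerivWithinAt) h0
    (fun x _ => hf' x) s (Ico_subset_Icc_self hs)
  have hA : 0 ≤ A := (norm_nonneg _).trans h0
  rw [hst]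
  refine hgron.trans ((gronwallBound_mono hA hε hk.le (by linarith [hs.2] : s - 0 ≤ 1)).trans ?_)
  simp only [gronwallBound_of_K_ne_0 hk.ne', mul_one]
  have : 0 ≤ ε / k := div_nonneg hε hk.le
  nlinarith [Real.exp_pos k]

variable {f : E → ℝ}

theorem sub_mul_sq_le_fderiv_apply_self (hf : Differentiable ℝ (fderiv ℝ f))
    (hdf0 : fderiv ℝ f 0 = 0) {B : E →L[ℝ] E →L[ℝ] ℝ} {m ε δ : ℝ}
    (hB : ∀ u, m * ‖u‖ ^ 2 ≤ B u u)
    (hclose : ∀ x ∈ closedBall (0 : E) δ, ‖fderiv ℝ (fderiv ℝ f) x - B‖ ≤ ε)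
    {u : E} (hu : ‖u‖ ≤ δ) : (m - ε) * ‖u‖ ^ 2 ≤ fderiv ℝ f u u := by
  have hsub : ‖fderiv ℝ f u - B u‖ ≤ ε * ‖u‖ := by
    refine norm_le_mul_norm_of_norm_fderiv_le (g := fun x => fderiv ℝ f x - B x)
      (fun y _ => (hf y).sub B.differentiableAt) (by simp [hdf0]) (fun y hy => ?_) hu
    have h : HasFDerivAt (fun x => fderiv ℝ f x - B x) (fderiv ℝ (fderiv ℝ f) y - B) y :=
      (hf y).hasFDerivAt.sub B.hasFDerivAt
    rw [h.fderiv]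
    exact hclose y hy
  have h1 : |fderiv ℝ f u u - B u u| ≤ ε * ‖u‖ * ‖u‖ :=
    ((fderiv ℝ f u - B u).le_opNorm u).trans (by gcongr)
  nlinarith [(abs_le.mp h1).1, hB u]

theorem half_mul_sq_le_of_mul_sq_le_fderiv_apply_self (hf : Differentiable ℝ f) (hf0 : f 0 = 0)
    {k δ : ℝ} (hk : ∀ v : E, ‖v‖ ≤ δ → k * ‖v‖ ^ 2 ≤ fderiv ℝ f v v) {u : E} (hu : ‖u‖ ≤ δ) :
    k / 2 * ‖u‖ ^ 2 ≤ f u := by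
  have hline : ∀ t ∈ Icc (0 : ℝ) 1, HasDerivAt (fun s => f (s • u)) (fderiv ℝ f (t • u) u) t :=
    fun t _ => (hf _).hasFDerivAt.comp_hasDerivAt t (by simpa using (hasDerivAt_id t).smul_const u)
  have key := add_half_le_of_mul_le_deriv (c := k * ‖u‖ ^ 2) hline fun t ht => by
    have h := hk (t • u) (by
      rw [norm_smul, Real.norm_of_nonneg ht.1.le]; nlinarith [norm_nonneg u, ht.2])
    rw [norm_smul, Real.norm_of_nonneg ht.1.le, map_smul, smul_eq_mul] at h
    nlinarith [ht.1]
  simp only [zero_smul, one_smul, hf0] at key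
  linarith

theorem exists_quadratic_bounds_of_isCoercive (hf : ContDiff ℝ 2 f) (hf0 : f 0 = 0)
    (hdf0 : fderiv ℝ f 0 = 0) (hB : IsCoercive (fderiv ℝ (fderiv ℝ f) 0)) :
    ∃ m M δ : ℝ, 0 < m ∧ 0 < M ∧ 0 < δ ∧ ∀ u : E, ‖u‖ ≤ δ →
      m * ‖u‖ ^ 2 ≤ f u ∧ f u ≤ M * ‖u‖ ^ 2 ∧ m * ‖u‖ ^ 2 ≤ fderiv ℝ f u u ∧
      ‖fderiv ℝ f u‖ ≤ M * ‖u‖ ∧ ‖fderiv ℝ (fderiv ℝ f) u‖ ≤ M := by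
  set B := fderiv ℝ (fderiv ℝ f) 0
  obtain ⟨m₀, hm₀, hcoer⟩ := hB
  have hdf : ContDiff ℝ 1 (fderiv ℝ f) := hf.fderiv_right (by norm_num)
  have hdiff : Differentiable ℝ (fderiv ℝ f) := hdf.differentiable one_ne_zero
  obtain ⟨δ, hδ, hclose⟩ := Metric.continuousAt_iff.mp
    ((hdf.continuous_fderiv one_ne_zero).continuousAt (x := 0)) (m₀ / 2) (by positivity)
  have hD2 : ∀ x ∈ closedBall (0 : E) (δ / 2), ‖fderiv ℝ (fderiv ℝ f) x - B‖ ≤ m₀ / 2 := by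
    intro x hx
    have h := hclose (x := x) (by rw [mem_closedBall] at hx; linarith)
    rw [dist_eq_norm] at h
    exact h.le
  set M := ‖B‖ + m₀ / 2
  have hD2M : ∀ x ∈ closedBall (0 : E) (δ / 2), ‖fderiv ℝ (fderiv ℝ f) x‖ ≤ M := fun x hx =>
    (norm_le_norm_add_norm_sub' _ B).trans (by simp only [M]; linarith [hD2 x hx])
  have hDf : ∀ x ∈ closedBall (0 : E) (δ / 2), ‖fderiv ℝ f x‖ ≤ M * ‖x‖ := fun x hx =>
    norm_le_mul_norm_of_norm_fderiv_le (fun y _ => hdiff y) hdf0 hD2M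
      (mem_closedBall_zero_iff.mp hx)
  have hself : ∀ v : E, ‖v‖ ≤ δ / 2 → m₀ / 2 * ‖v‖ ^ 2 ≤ fderiv ℝ f v v := fun v hv => by
    have := sub_mul_sq_le_fderiv_apply_self hdiff hdf0 (fun u => (hcoer u).trans_eq' (by ring))
      hD2 hv
    linarith
  refine ⟨m₀ / 4, M, δ / 2, by positivity, by positivity, by positivity, fun u hu => ⟨?_, ?_,
    (hself u hu).trans' (by nlinarith [sq_nonneg ‖u‖]), hDf u (by simpa using hu),
    hD2M u (by simpa using hu)⟩⟩
  · have := half_mul_sq_le_of_mul_sq_le_fderiv_apply_self (hf.differentiable two_ne_zero) hf0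
      hself hu
    linarith
  · have := norm_le_mul_sq_of_norm_fderiv_le (by positivity)
      (fun y _ => (hf.differentiable two_ne_zero) y) hf0 hDf hu
    exact (le_abs_self _).trans (by rwa [Real.norm_eq_abs] at this)

theorem exists_orbit_bounds {H : E → ℝ} {K : ℝ → ℝ} {ψ : ℝ → ℝ → E} {r₀ c₁ c₂ : ℝ}
    (hHC2 : ContDiff ℝ 2 H) (hH0 : H 0 = 0) (hgrad0 : fderiv ℝ H 0 = 0)
    (hHess : IsCoercive (fderiv ℝ (fderiv ℝ H) 0)) (hr₀ : 0 < r₀)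
    (hc₁ : 0 < c₁) (hKgrowth : ∀ I ∈ Ioo 0 r₀, c₁ * I ≤ K I ∧ K I ≤ c₂ * I)
    (hlevel : ∀ I ∈ Ioo 0 r₀, ∀ θ : ℝ, H (ψ I θ) = K I)
    (hψsmall : ∀ δ : ℝ, 0 < δ → ∃ η > 0, ∀ I ∈ Ioo 0 (min η r₀), ∀ θ : ℝ, ‖ψ I θ‖ ≤ δ) :
    ∃ r, 0 < r ∧ r ≤ r₀ ∧ ∃ m c g M : ℝ, 0 < m ∧ 0 < c ∧ 0 ≤ g ∧ 0 < M ∧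
      ∀ I ∈ Ioo 0 r, ∀ θ : ℝ, c * √I ≤ ‖ψ I θ‖ ∧ m * ‖ψ I θ‖ ^ 2 ≤ fderiv ℝ H (ψ I θ) (ψ I θ) ∧
        ‖fderiv ℝ H (ψ I θ)‖ ≤ g * √I ∧ ‖fderiv ℝ (fderiv ℝ H) (ψ I θ)‖ ≤ M := by
  obtain ⟨m, M, δ, hm, hM, hδ, hHδ⟩ := exists_quadratic_bounds_of_isCoercive hHC2 hH0 hgrad0 hHess
  obtain ⟨η, hη, hψδ⟩ := hψsmall δ hδ
  refine ⟨min η r₀, lt_min hη hr₀, min_le_right _ _, m, √(c₁ / M), M * √(c₂ / m), M, hm,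
    Real.sqrt_pos.mpr (div_pos hc₁ hM), by positivity, hM, fun I hI θ => ?_⟩
  have hI₀ : I ∈ Ioo 0 r₀ := ⟨hI.1, hI.2.trans_le (min_le_right _ _)⟩
  obtain ⟨hlow, hup, hself, hgrad, hD2⟩ := hHδ _ (hψδ I hI θ)
  have hK := hKgrowth I hI₀
  rw [← hlevel I hI₀ θ] at hK
  have hsize :=
    sqrt_mul_sqrt_le_and_le_of_sq_bounds hm hM hI.1.le (norm_nonneg _) hlow hup hK.1 hK.2
  exact ⟨hsize.1, hself, hgrad.trans (by rw [mul_assoc]; gcongr; exact hsize.2), hD2⟩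

theorem fderiv_apply_eq_of_eventuallyEq {γ : ℝ → E} {k : ℝ → ℝ} {x k' : ℝ} {γ' : E}
    (hf : DifferentiableAt ℝ f (γ x)) (hγ : HasDerivAt γ γ' x) (hk : HasDerivAt k k' x)
    (heq : ∀ᶠ y in 𝓝 x, f (γ y) = k y) : fderiv ℝ f (γ x) γ' = k' :=
  (hf.hasFDerivAt.comp_hasDerivAt x hγ).unique (hk.congr_of_eventuallyEq heq)

theorem norm_inv_smul_le {w ω₀ : ℝ} (hω₀ : 0 < ω₀) (hw : ω₀ ≤ w) {T : (E →L[ℝ] ℝ) →L[ℝ] F}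
    (hT : ‖T‖ ≤ 1) (L : E →L[ℝ] ℝ) : ‖w⁻¹ • T L‖ ≤ ‖L‖ / ω₀ := by
  rw [norm_smul, norm_inv, Real.norm_of_nonneg (hω₀.le.trans hw), inv_mul_eq_div]
  exact div_le_div₀ (norm_nonneg L)
    ((T.le_opNorm L).trans (mul_le_of_le_one_left (norm_nonneg L) hT)) hω₀ hw

theorem exists_hasDerivAt_inv_smul_fderiv_comp (hf : ContDiff ℝ 2 f)
    {T : (E →L[ℝ] ℝ) →L[ℝ] F} (hT : ‖T‖ ≤ 1) {w : ℝ → ℝ} {γ : ℝ → E} {w' x ω₀ M : ℝ} {γ' : E}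
    (hw : HasDerivAt w w' x) (hγ : HasDerivAt γ γ' x) (hω₀ : 0 < ω₀) (hwx : ω₀ ≤ w x)
    (hM : ‖fderiv ℝ (fderiv ℝ f) (γ x)‖ ≤ M) :
    ∃ d : F, HasDerivAt (fun y => (w y)⁻¹ • T (fderiv ℝ f (γ y))) d x ∧
      ‖d‖ ≤ M * ‖γ'‖ / ω₀ + |w'| * ‖fderiv ℝ f (γ x)‖ / ω₀ ^ 2 := by
  have hdf : Differentiable ℝ (fderiv ℝ f) :=
    (hf.fderiv_right (m := 1) (by norm_num)).differentiable one_ne_zero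
  have hTdf : HasDerivAt (fun y => T (fderiv ℝ f (γ y)))
      (T (fderiv ℝ (fderiv ℝ f) (γ x) γ')) x :=
    T.hasFDerivAt.comp_hasDerivAt x ((hdf _).hasFDerivAt.comp_hasDerivAt x hγ)
  refine ⟨_, (hw.inv (hω₀.trans_le hwx).ne').smul hTdf,
    (norm_inv_smul_add_smul_le hω₀ hwx _ _).trans (add_le_add ?_ ?_)⟩
  · gcongr
    calc ‖T (fderiv ℝ (fderiv ℝ f) (γ x) γ')‖ ≤ 1 * ‖fderiv ℝ (fderiv ℝ f) (γ x) γ'‖ :=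
          (T.le_opNorm _).trans (by gcongr)
      _ ≤ M * ‖γ'‖ := by rw [one_mul]; exact (ContinuousLinearMap.le_opNorm _ _).trans (by gcongr)
  · gcongr
    exact (T.le_opNorm _).trans (by nlinarith [norm_nonneg (fderiv ℝ f (γ x))])

end Calculus

/-- `J∇H = (-∂_y H, ∂_x H)`, as a function of the differential `dH`. -/
noncomputable def hamiltonianVector : (ℝ × ℝ →L[ℝ] ℝ) →L[ℝ] ℝ × ℝ :=
  (-ContinuousLinearMap.apply ℝ ℝ ((0 : ℝ), (1 : ℝ))).prod
    (ContinuousLinearMap.apply ℝ ℝ ((1 : ℝ), (0 : ℝ)))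

theorem hamiltonianVector_apply (L : ℝ × ℝ →L[ℝ] ℝ) :
    hamiltonianVector L = (-L ((0 : ℝ), (1 : ℝ)), L ((1 : ℝ), (0 : ℝ))) := rfl

theorem norm_hamiltonianVector_le : ‖hamiltonianVector‖ ≤ 1 := by
  refine ContinuousLinearMap.opNorm_le_bound _ zero_le_one fun L => ?_
  rw [hamiltonianVector_apply, Prod.norm_def, one_mul, norm_neg]
  exact max_le (by simpa using L.le_opNorm ((0 : ℝ), (1 : ℝ)))
    (by simpa using L.le_opNorm ((1 : ℝ), (0 : ℝ)))

theorem eq_inv_smul_hamiltonianVector {p : ℝ × ℝ} {L : ℝ × ℝ →L[ℝ] ℝ} {w : ℝ}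
    (h1 : p.1 = -L (0, 1) / w) (h2 : p.2 = L (1, 0) / w) :
    p = w⁻¹ • hamiltonianVector L := by
  ext
  · simp [h1, hamiltonianVector_apply, div_eq_inv_mul]
  · simp [h2, hamiltonianVector_apply, div_eq_inv_mul]

theorem norm_apply_snd_le_one : ‖ContinuousLinearMap.apply ℝ ℝ ((0 : ℝ), (1 : ℝ))‖ ≤ 1 :=
  norm_apply_le_one (by simp [Prod.norm_def])

theorem mul_norm_mul_norm_le_abs_of_fst_eq_zero {L : ℝ × ℝ →L[ℝ] ℝ} {u v : ℝ × ℝ} {m : ℝ}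
    (hu : u.1 = 0) (hv : v.1 = 0) (hL : m * ‖u‖ ^ 2 ≤ L u) :
    m * ‖u‖ * ‖v‖ ≤ |L v| := by
  rcases eq_or_ne u.2 0 with hu2 | hu2
  · have : u = 0 := Prod.ext hu hu2
    simp [this]
  have hvu : v = (v.2 / u.2) • u := by
    ext
    · simp [hu, hv]
    · simp [div_mul_cancel₀ _ hu2]
  rw [hvu, map_smul, smul_eq_mul, norm_smul, Real.norm_eq_abs, abs_mul]
  calc m * ‖u‖ * (|v.2 / u.2| * ‖u‖) = |v.2 / u.2| * (m * ‖u‖ ^ 2) := by ring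
    _ ≤ |v.2 / u.2| * |L u| := by gcongr; exact hL.trans (le_abs_self _)

section ActionAngle

variable {H : ℝ × ℝ → ℝ} {K Om Om' : ℝ → ℝ} {ψ ψI ψθ ψIθ : ℝ → ℝ → ℝ × ℝ} {r₀ : ℝ}

theorem norm_psiI_zero_le (hH : Differentiable ℝ H) {I m c Λ : ℝ} (hI : I ∈ Ioo 0 r₀)
    (hK : HasDerivAt K (Om I) I) (hψI : HasDerivAt (fun I' => ψ I' 0) (ψI I 0) I)
    (hlevel : ∀ I ∈ Ioo 0 r₀, ∀ θ : ℝ, H (ψ I θ) = K I) (hψ10 : (ψ I 0).1 = 0)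
    (hψI10 : (ψI I 0).1 = 0) (hm : 0 < m) (hc : 0 < c)
    (hDH : m * ‖ψ I 0‖ ^ 2 ≤ fderiv ℝ H (ψ I 0) (ψ I 0)) (hlow : c * √I ≤ ‖ψ I 0‖)
    (hOmub : |Om I| ≤ Λ) :
    ‖ψI I 0‖ ≤ Λ / (m * c) / √I := by
  have hOm : fderiv ℝ H (ψ I 0) (ψI I 0) = Om I :=
    fderiv_apply_eq_of_eventuallyEq (γ := fun I' => ψ I' 0) (hH _) hψI hK
      (eventually_of_mem (isOpen_Ioo.mem_nhds hI) fun y hy => hlevel y hy 0)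
  have key := mul_norm_mul_norm_le_abs_of_fst_eq_zero hψ10 hψI10 hDH
  rw [hOm] at key
  rw [div_div, le_div_iff₀ (mul_pos (mul_pos hm hc) (Real.sqrt_pos.mpr hI.1))]
  nlinarith [mul_le_mul_of_nonneg_left hlow (mul_nonneg hm.le (norm_nonneg (ψI I 0)))]

theorem norm_psiI_le (hHC2 : ContDiff ℝ 2 H) {I ω₀ c₂ M g b : ℝ} (hI : I ∈ Ioo 0 r₀)
    (hω₀ : 0 < ω₀) (hM : 0 < M) (hOmlb : ω₀ ≤ Om I) (hOm' : HasDerivAt Om (Om' I) I)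
    (hOm'le : |Om' I| ≤ c₂ / I) (hper : ∀ I θ : ℝ, ψ I (θ + 1) = ψ I θ)
    (hψI : ∀ θ : ℝ, HasDerivAt (fun I' => ψ I' θ) (ψI I θ) I)
    (hmixed1 : ∀ θ : ℝ, HasDerivAt (fun θ' => ψI I θ') (ψIθ I θ) θ)
    (hmixed2 : ∀ θ : ℝ, HasDerivAt (fun I' => ψθ I' θ) (ψIθ I θ) I)
    (hψθ_eq : ∀ I ∈ Ioo 0 r₀, ∀ θ : ℝ,
      ψθ I θ = (Om I)⁻¹ • hamiltonianVector (fderiv ℝ H (ψ I θ)))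
    (hD2 : ∀ θ : ℝ, ‖fderiv ℝ (fderiv ℝ H) (ψ I θ)‖ ≤ M)
    (hgrad : ∀ θ : ℝ, ‖fderiv ℝ H (ψ I θ)‖ ≤ g * √I) (hψI0 : ‖ψI I 0‖ ≤ b / √I) (θ : ℝ) :
    ‖ψI I θ‖ ≤ (b + c₂ * g / (ω₀ * M)) * Real.exp (M / ω₀) / √I := by
  have hc₂ : 0 ≤ c₂ := by
    have := (abs_nonneg _).trans hOm'le
    rwa [le_div_iff₀ hI.1, zero_mul] at this
  have hg : 0 ≤ g := by
    have := (norm_nonneg _).trans (hgrad 0)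
    exact (mul_nonneg_iff_of_pos_right (Real.sqrt_pos.mpr hI.1)).mp this
  have hperiodic : Function.Periodic (ψI I) 1 := fun t =>
    (by simpa only [hper] using hψI (t + 1) : HasDerivAt (fun I' => ψ I' t) (ψI I (t + 1)) I).unique
      (hψI t)
  have hψIθ : ∀ t, ‖ψIθ I t‖ ≤ M / ω₀ * ‖ψI I t‖ + c₂ * g / ω₀ ^ 2 / √I := by
    intro t
    obtain ⟨d, hd, hdle⟩ := exists_hasDerivAt_inv_smul_fderiv_comp hHC2 norm_hamiltonianVector_le
      hOm' (hψI t) hω₀ hOmlb (hD2 t)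
    have : ψIθ I t = d := (hmixed2 t).unique (hd.congr_of_eventuallyEq
      (eventually_of_mem (isOpen_Ioo.mem_nhds hI) fun y hy => hψθ_eq y hy t))
    calc ‖ψIθ I t‖ = ‖d‖ := by rw [this]
      _ ≤ M * ‖ψI I t‖ / ω₀ + |Om' I| * ‖fderiv ℝ H (ψ I t)‖ / ω₀ ^ 2 := hdle
      _ ≤ M * ‖ψI I t‖ / ω₀ + c₂ * g / √I / ω₀ ^ 2 := by
        gcongr; exact abs_mul_le_div_sqrt hI.1 hOm'le (norm_nonneg _) (hgrad t)
      _ = M / ω₀ * ‖ψI I t‖ + c₂ * g / ω₀ ^ 2 / √I := by ring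
  have key := norm_le_of_periodic_of_norm_deriv_le hperiodic hmixed1 hψI0 (by positivity)
    (by positivity) hψIθ θ
  refine key.trans (le_of_eq ?_)
  field_simp

theorem eq_inv_smul_apply {a : ℝ → ℝ → ℝ}
    (ha : ∀ I θ : ℝ, a I θ = (fderiv ℝ H (ψ I θ)) (0, 1) / Om I) :
    a = fun I θ => (Om I)⁻¹ • ContinuousLinearMap.apply ℝ ℝ ((0 : ℝ), (1 : ℝ))
      (fderiv ℝ H (ψ I θ)) := by
  ext I θ
  rw [ha, div_eq_inv_mul, smul_eq_mul, ContinuousLinearMap.apply_apply]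

theorem exists_hasDerivAt_angle_le (hHC2 : ContDiff ℝ 2 H) {a : ℝ → ℝ → ℝ}
    (ha : ∀ I θ : ℝ, a I θ = (fderiv ℝ H (ψ I θ)) (0, 1) / Om I) {I θ ω₀ M g : ℝ}
    (hω₀ : 0 < ω₀) (hOmlb : ω₀ ≤ Om I) (hψθ : HasDerivAt (fun θ' => ψ I θ') (ψθ I θ) θ)
    (hψθ_eq : ψθ I θ = (Om I)⁻¹ • hamiltonianVector (fderiv ℝ H (ψ I θ)))
    (hD2 : ‖fderiv ℝ (fderiv ℝ H) (ψ I θ)‖ ≤ M) (hgrad : ‖fderiv ℝ H (ψ I θ)‖ ≤ g * √I) :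
    ∃ aθ : ℝ, HasDerivAt (fun θ' => a I θ') aθ θ ∧
      |a I θ| + |aθ| ≤ (g / ω₀ + M * g / ω₀ ^ 2) * √I := by
  obtain ⟨d, hd, hdle⟩ := exists_hasDerivAt_inv_smul_fderiv_comp (w := fun _ => Om I) hHC2
    norm_apply_snd_le_one (hasDerivAt_const θ (Om I)) hψθ hω₀ hOmlb hD2
  have hψθle : ‖ψθ I θ‖ ≤ g * √I / ω₀ := by
    rw [hψθ_eq]
    exact (norm_inv_smul_le hω₀ hOmlb norm_hamiltonianVector_le _).trans (by gcongr)
  have hale : |a I θ| ≤ g * √I / ω₀ := by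
    rw [eq_inv_smul_apply ha, ← Real.norm_eq_abs]
    exact (norm_inv_smul_le hω₀ hOmlb norm_apply_snd_le_one _).trans (by gcongr)
  refine ⟨d, by rwa [eq_inv_smul_apply ha], ?_⟩
  have hM : 0 ≤ M := (norm_nonneg (fderiv ℝ (fderiv ℝ H) (ψ I θ))).trans hD2
  rw [← Real.norm_eq_abs d]
  calc |a I θ| + ‖d‖ ≤ g * √I / ω₀ + M * (g * √I / ω₀) / ω₀ := by
        refine add_le_add hale (hdle.trans ?_)
        simp only [abs_zero, zero_mul, zero_div, add_zero]
        gcongr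
    _ = (g / ω₀ + M * g / ω₀ ^ 2) * √I := by ring

theorem exists_hasDerivAt_action_le (hHC2 : ContDiff ℝ 2 H) {a : ℝ → ℝ → ℝ}
    (ha : ∀ I θ : ℝ, a I θ = (fderiv ℝ H (ψ I θ)) (0, 1) / Om I) {I θ ω₀ c₂ M g B : ℝ}
    (hI : 0 < I) (hω₀ : 0 < ω₀) (hOmlb : ω₀ ≤ Om I) (hOm' : HasDerivAt Om (Om' I) I)
    (hOm'le : |Om' I| ≤ c₂ / I) (hψI : HasDerivAt (fun I' => ψ I' θ) (ψI I θ) I)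
    (hD2 : ‖fderiv ℝ (fderiv ℝ H) (ψ I θ)‖ ≤ M) (hgrad : ‖fderiv ℝ H (ψ I θ)‖ ≤ g * √I)
    (hψIle : ‖ψI I θ‖ ≤ B / √I) :
    ∃ aI : ℝ, HasDerivAt (fun I' => a I' θ) aI I ∧
      |aI| ≤ (M * B / ω₀ + c₂ * g / ω₀ ^ 2) / √I := by
  obtain ⟨d, hd, hdle⟩ := exists_hasDerivAt_inv_smul_fderiv_comp hHC2 norm_apply_snd_le_one
    hOm' hψI hω₀ hOmlb hD2
  refine ⟨d, by rwa [eq_inv_smul_apply ha], ?_⟩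
  have hM : 0 ≤ M := (norm_nonneg (fderiv ℝ (fderiv ℝ H) (ψ I θ))).trans hD2
  rw [← Real.norm_eq_abs d]
  calc ‖d‖ ≤ M * ‖ψI I θ‖ / ω₀ + |Om' I| * ‖fderiv ℝ H (ψ I θ)‖ / ω₀ ^ 2 := hdle
    _ ≤ M * (B / √I) / ω₀ + c₂ * g / √I / ω₀ ^ 2 := by
      gcongr; exact abs_mul_le_div_sqrt hI hOm'le (norm_nonneg _) hgrad
    _ = (M * B / ω₀ + c₂ * g / ω₀ ^ 2) / √I := by ring

end ActionAngle

theorem stmt_18_general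
    (H : ℝ × ℝ → ℝ) (hHC2 : ContDiff ℝ 2 H) (hH0 : H (0, 0) = 0)
    (hgrad0 : fderiv ℝ H (0, 0) = 0)
    (hHess : ∀ u : ℝ × ℝ, u ≠ 0 → 0 < iteratedFDeriv ℝ 2 H (0, 0) ![u, u])
    (K Om Om' : ℝ → ℝ) (ω₀ : ℝ) (hω₀ : 0 < ω₀)
    (hK : ∀ I : ℝ, 0 < I → HasDerivAt K (Om I) I)
    (hOmlb : ∀ I : ℝ, 0 < I → ω₀ ≤ Om I)
    (hOm' : ∀ I : ℝ, 0 < I → HasDerivAt Om (Om' I) I)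
    (r₀ c₁ c₂ : ℝ) (hr₀ : 0 < r₀) (hc₁ : 0 < c₁) (hc₂ : 0 < c₂)
    (hKgrowth : ∀ I ∈ Set.Ioo (0:ℝ) r₀, c₁ * I ≤ K I ∧ K I ≤ c₂ * I ∧ |Om' I| ≤ c₂ / I)
    (ψ ψI ψθ ψIθ : ℝ → ℝ → ℝ × ℝ)
    (hper : ∀ I θ : ℝ, ψ I (θ + 1) = ψ I θ)
    (hψθ : ∀ I ∈ Set.Ioo (0:ℝ) r₀, ∀ θ : ℝ, HasDerivAt (fun θ' => ψ I θ') (ψθ I θ) θ)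
    (hψI : ∀ I ∈ Set.Ioo (0:ℝ) r₀, ∀ θ : ℝ, HasDerivAt (fun I' => ψ I' θ) (ψI I θ) I)
    (hmixed1 : ∀ I ∈ Set.Ioo (0:ℝ) r₀, ∀ θ : ℝ, HasDerivAt (fun θ' => ψI I θ') (ψIθ I θ) θ)
    (hmixed2 : ∀ I ∈ Set.Ioo (0:ℝ) r₀, ∀ θ : ℝ, HasDerivAt (fun I' => ψθ I' θ) (ψIθ I θ) I)
    (hlevel : ∀ I ∈ Set.Ioo (0:ℝ) r₀, ∀ θ : ℝ, H (ψ I θ) = K I)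
    (hψ10 : ∀ I ∈ Set.Ioo (0:ℝ) r₀, (ψ I 0).1 = 0)
    (hψI10 : ∀ I ∈ Set.Ioo (0:ℝ) r₀, (ψI I 0).1 = 0)
    (hθ1 : ∀ I ∈ Set.Ioo (0:ℝ) r₀, ∀ θ : ℝ,
      (ψθ I θ).1 = -(fderiv ℝ H (ψ I θ)) (0, 1) / Om I)
    (hθ2 : ∀ I ∈ Set.Ioo (0:ℝ) r₀, ∀ θ : ℝ,
      (ψθ I θ).2 = (fderiv ℝ H (ψ I θ)) (1, 0) / Om I)
    (hψsmall : ∀ δ : ℝ, 0 < δ → ∃ η > 0, ∀ I ∈ Set.Ioo (0:ℝ) (min η r₀), ∀ θ : ℝ,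
      ‖ψ I θ‖ ≤ δ)
    -- the coefficient `a(I,θ) = ∂_yH(ψ(I,θ))/ω(I)`
    (a : ℝ → ℝ → ℝ)
    (ha : ∀ I θ : ℝ, a I θ = (fderiv ℝ H (ψ I θ)) (0, 1) / Om I) :
    ∃ r : ℝ, 0 < r ∧ r ≤ r₀ ∧ ∃ C > 0, ∀ I ∈ Set.Ioo (0:ℝ) r, ∀ θ : ℝ,
      (∃ aθ : ℝ, HasDerivAt (fun θ' => a I θ') aθ θ ∧
        |a I θ| + |aθ| ≤ C * Real.sqrt I) ∧
      (∃ aI : ℝ, HasDerivAt (fun I' => a I' θ) aI I ∧ |aI| ≤ C / Real.sqrt I) := by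
  obtain ⟨r, hr, hrr₀, m, c, g, M, hm, hc, hg, hM, horbit⟩ := exists_orbit_bounds hHC2 hH0 hgrad0
    (isCoercive_of_pos _ fun u hu => by
      simpa [iteratedFDeriv_two_apply, Prod.mk_zero_zero] using hHess u hu)
    hr₀ hc₁ (fun I hI => ⟨(hKgrowth I hI).1, (hKgrowth I hI).2.1⟩) hlevel hψsmall
  have hsub : Ioo 0 r ⊆ Ioo 0 r₀ := Ioo_subset_Ioo_right hrr₀
  have hOmub : ∀ I ∈ Ioo 0 r₀, |Om I| ≤ 3 * c₂ := fun I hI =>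
    (abs_of_pos (hω₀.trans_le (hOmlb I hI.1))).trans_le <| le_three_mul_of_hasDerivAt
      (fun I hI => hK I hI.1) (fun I hI => hOm' I hI.1)
      (fun I hI => (mul_nonneg hc₁.le hI.1.le).trans (hKgrowth I hI).1)
      (fun I hI => (hKgrowth I hI).2.1) (fun I hI => (hKgrowth I hI).2.2) hI
  have hψθ_eq : ∀ I ∈ Ioo 0 r₀, ∀ θ,
      ψθ I θ = (Om I)⁻¹ • hamiltonianVector (fderiv ℝ H (ψ I θ)) := fun I hI θ =>
    eq_inv_smul_hamiltonianVector (hθ1 I hI θ) (hθ2 I hI θ)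
  set B := (3 * c₂ / (m * c) + c₂ * g / (ω₀ * M)) * Real.exp (M / ω₀)
  have hψIle : ∀ I ∈ Ioo 0 r, ∀ θ, ‖ψI I θ‖ ≤ B / √I := fun I hI => by
    have hI₀ := hsub hI
    exact norm_psiI_le hHC2 hI₀ hω₀ hM (hOmlb I hI.1) (hOm' I hI.1) (hKgrowth I hI₀).2.2 hper
      (hψI I hI₀) (hmixed1 I hI₀) (hmixed2 I hI₀) hψθ_eq (fun θ => (horbit I hI θ).2.2.2)
      (fun θ => (horbit I hI θ).2.2.1)
      (norm_psiI_zero_le (hHC2.differentiable two_ne_zero) hI₀ (hK I hI.1) (hψI I hI₀ 0) hlevel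
        (hψ10 I hI₀) (hψI10 I hI₀) hm hc (horbit I hI 0).2.1 (horbit I hI 0).1 (hOmub I hI₀))
  refine ⟨r, hr, hrr₀, (g / ω₀ + M * g / ω₀ ^ 2) + (M * B / ω₀ + c₂ * g / ω₀ ^ 2), by positivity,
    fun I hI θ => ⟨?_, ?_⟩⟩
  · obtain ⟨aθ, hd, hle⟩ := exists_hasDerivAt_angle_le hHC2 ha hω₀ (hOmlb I hI.1)
      (hψθ I (hsub hI) θ) (hψθ_eq I (hsub hI) θ) (horbit I hI θ).2.2.2 (horbit I hI θ).2.2.1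
    exact ⟨aθ, hd, hle.trans (mul_le_mul_of_nonneg_right
      (le_add_of_nonneg_right (by positivity)) (Real.sqrt_nonneg I))⟩
  · obtain ⟨aI, hd, hle⟩ := exists_hasDerivAt_action_le hHC2 ha hI.1 hω₀ (hOmlb I hI.1)
      (hOm' I hI.1) (hKgrowth I (hsub hI)).2.2 (hψI I (hsub hI) θ) (horbit I hI θ).2.2.2
      (horbit I hI θ).2.2.1 (hψIle I hI θ)
    exact ⟨aI, hd, hle.trans (div_le_div_of_nonneg_right
      (le_add_of_nonneg_left (by positivity)) (Real.sqrt_nonneg I))⟩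

/-- With `a(I,θ) = ∂_yH(ψ(I,θ))/ω(I)` the noise coefficient of the action
variable, there are `r ∈ (0, r₀]` and `C > 0` such that for all `I ∈ (0, r)`,
`sup_θ (|a(I,θ)| + |∂_θa(I,θ)|) ≤ C√I` and `sup_θ |∂_Ia(I,θ)| ≤ C/√I`. -/
theorem stmt_18
    (H : ℝ × ℝ → ℝ) (hHC2 : ContDiff ℝ 2 H) (hH0 : H (0, 0) = 0)
    (hgrad0 : fderiv ℝ H (0, 0) = 0)
    (hHess : ∀ u : ℝ × ℝ, u ≠ 0 → 0 < iteratedFDeriv ℝ 2 H (0, 0) ![u, u])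
    (K Om Om' : ℝ → ℝ) (ω₀ : ℝ) (hω₀ : 0 < ω₀)
    (hK : ∀ I : ℝ, 0 < I → HasDerivAt K (Om I) I)
    (hOmlb : ∀ I : ℝ, 0 < I → ω₀ ≤ Om I)
    (hOm' : ∀ I : ℝ, 0 < I → HasDerivAt Om (Om' I) I)
    (r₀ c₁ c₂ : ℝ) (hr₀ : 0 < r₀) (hc₁ : 0 < c₁) (hc₂ : 0 < c₂)
    (hKgrowth : ∀ I ∈ Set.Ioo (0:ℝ) r₀, c₁ * I ≤ K I ∧ K I ≤ c₂ * I ∧ |Om' I| ≤ c₂ / I)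
    (ψ ψI ψθ ψIθ : ℝ → ℝ → ℝ × ℝ)
    (hper : ∀ I θ : ℝ, ψ I (θ + 1) = ψ I θ)
    (hψθ : ∀ I ∈ Set.Ioo (0:ℝ) r₀, ∀ θ : ℝ, HasDerivAt (fun θ' => ψ I θ') (ψθ I θ) θ)
    (hψI : ∀ I ∈ Set.Ioo (0:ℝ) r₀, ∀ θ : ℝ, HasDerivAt (fun I' => ψ I' θ) (ψI I θ) I)
    (hψθcont : ContinuousOn (Function.uncurry ψθ) (Set.Ioo (0:ℝ) r₀ ×ˢ Set.univ))
    (hψIcont : ContinuousOn (Function.uncurry ψI) (Set.Ioo (0:ℝ) r₀ ×ˢ Set.univ))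
    (hmixed1 : ∀ I ∈ Set.Ioo (0:ℝ) r₀, ∀ θ : ℝ, HasDerivAt (fun θ' => ψI I θ') (ψIθ I θ) θ)
    (hmixed2 : ∀ I ∈ Set.Ioo (0:ℝ) r₀, ∀ θ : ℝ, HasDerivAt (fun I' => ψθ I' θ) (ψIθ I θ) I)
    (hmixedcont : ContinuousOn (Function.uncurry ψIθ) (Set.Ioo (0:ℝ) r₀ ×ˢ Set.univ))
    (hlevel : ∀ I ∈ Set.Ioo (0:ℝ) r₀, ∀ θ : ℝ, H (ψ I θ) = K I)
    (hψ10 : ∀ I ∈ Set.Ioo (0:ℝ) r₀, (ψ I 0).1 = 0)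
    (hψI10 : ∀ I ∈ Set.Ioo (0:ℝ) r₀, (ψI I 0).1 = 0)
    (hθ1 : ∀ I ∈ Set.Ioo (0:ℝ) r₀, ∀ θ : ℝ,
      (ψθ I θ).1 = -(fderiv ℝ H (ψ I θ)) (0, 1) / Om I)
    (hθ2 : ∀ I ∈ Set.Ioo (0:ℝ) r₀, ∀ θ : ℝ,
      (ψθ I θ).2 = (fderiv ℝ H (ψ I θ)) (1, 0) / Om I)
    (hψsmall : ∀ δ : ℝ, 0 < δ → ∃ η > 0, ∀ I ∈ Set.Ioo (0:ℝ) (min η r₀), ∀ θ : ℝ,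
      ‖ψ I θ‖ ≤ δ)
    -- the coefficient `a(I,θ) = ∂_yH(ψ(I,θ))/ω(I)`
    (a : ℝ → ℝ → ℝ)
    (ha : ∀ I θ : ℝ, a I θ = (fderiv ℝ H (ψ I θ)) (0, 1) / Om I) :
    ∃ r : ℝ, 0 < r ∧ r ≤ r₀ ∧ ∃ C > 0, ∀ I ∈ Set.Ioo (0:ℝ) r, ∀ θ : ℝ,
      (∃ aθ : ℝ, HasDerivAt (fun θ' => a I θ') aθ θ ∧
        |a I θ| + |aθ| ≤ C * Real.sqrt I) ∧
      (∃ aI : ℝ, HasDerivAt (fun I' => a I' θ) aI I ∧ |aI| ≤ C / Real.sqrt I) :=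
  stmt_18_general H hHC2 hH0 hgrad0 hHess K Om Om' ω₀ hω₀ hK hOmlb hOm' r₀ c₁ c₂ hr₀ hc₁ hc₂
    hKgrowth ψ ψI ψθ ψIθ hper hψθ hψI hmixed1 hmixed2 hlevel hψ10 hψI10 hθ1 hθ2 hψsmall a ha
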